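/- arXiv:1907.04610 — 7 statements merged into one kernel-verified Lean document; each statement's English description precedes it below -/
import Mathlib

section
/- Fix reals ε > 0, ṽ > 0, t* > 0 and an integer M ≥ 1, and set D(s) = ṽ²s/(ε²+s) for s > 0. Define, for Δt > 0, V_W(Δt) = (t*/(M·Δt)) · 2MΔt · ( D(Δt) + D(MΔt) − 2√(D(Δt)·D(MΔt)) ), which equals the variance of the summed differences of coupled Brownian increments over N = t*/(MΔt) coarse steps. Then lim_{Δt → 0⁺} V_W(Δt)/Δt = (2 t* ṽ²/ε²)·(√M − 1)². In particular V_W(Δt) converges to 0 at rate O(Δt) as Δt → 0⁺. -/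
open Filter Topology Real

/-!
Since `D(s) = s · ṽ²/(ε² + s)`, the quantity `D(Δt) + D(MΔt) − 2√(D(Δt)D(MΔt))` is the perfect
square `(√D(Δt) − √D(MΔt))²`, and the prefactor `(t*/(MΔt)) · 2MΔt` is just `2t*`. Dividing by
`Δt` gives `V_W(Δt)/Δt = 2t* (√(D(Δt)/Δt) − √(D(MΔt)/Δt))²`, where `D(cΔt)/Δt = cṽ²/(ε² + cΔt)`
tends to `cṽ²/ε²`; the limit is therefore `2t* (ṽ/ε − √M ṽ/ε)²`.
-/

lemma add_sub_two_mul_sqrt_mul {a b : ℝ} (ha : 0 ≤ a) (hb : 0 ≤ b) :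
    a + b - 2 * √(a * b) = (√a - √b) ^ 2 := by
  rw [sub_sq, sq_sqrt ha, sq_sqrt hb, sqrt_mul ha]
  ring

lemma sq_sqrt_sub_sqrt_div (a b : ℝ) {h : ℝ} (hh : 0 ≤ h) :
    (√a - √b) ^ 2 / h = (√(a / h) - √(b / h)) ^ 2 := by
  rw [sqrt_div' a hh, sqrt_div' b hh, ← sub_div, div_pow, sq_sqrt hh]

lemma sqrt_sub_sqrt_mul_sq {a c : ℝ} (ha : 0 ≤ a) (hc : 0 ≤ c) :
    (√a - √(c * a)) ^ 2 = a * (√c - 1) ^ 2 := by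
  rw [sqrt_mul hc, show √a - √c * √a = -(√a * (√c - 1)) by ring, neg_sq, mul_pow, sq_sqrt ha]

noncomputable def diffusionCoeff (ε vt s : ℝ) : ℝ := vt ^ 2 * s / (ε ^ 2 + s)

noncomputable def brownianDifferenceVariance (ε vt tstar M Δt : ℝ) : ℝ :=
  tstar / (M * Δt) *
    (2 * M * Δt *
      (diffusionCoeff ε vt Δt + diffusionCoeff ε vt (M * Δt)
        - 2 * √(diffusionCoeff ε vt Δt * diffusionCoeff ε vt (M * Δt))))

section

variable {ε vt : ℝ}

lemma diffusionCoeff_nonneg {s : ℝ} (hs : 0 ≤ s) : 0 ≤ diffusionCoeff ε vt s := by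
  unfold diffusionCoeff
  positivity

lemma tendsto_diffusionCoeff_mul_div (hε : ε ≠ 0) (c : ℝ) :
    Tendsto (fun h => diffusionCoeff ε vt (c * h) / h) (𝓝[≠] 0) (𝓝 (c * (vt ^ 2 / ε ^ 2))) := by
  have hcont : ContinuousAt (fun h : ℝ => c * (vt ^ 2 / (ε ^ 2 + c * h))) 0 :=
    continuousAt_const.mul <| continuousAt_const.div (by fun_prop) (by simpa using hε)
  refine (hcont.tendsto.mono_left nhdsWithin_le_nhds).congr' ?_ |>.trans (by simp)
  filter_upwards [self_mem_nhdsWithin] with h (hh : h ≠ 0)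
  unfold diffusionCoeff
  field_simp

lemma brownianDifferenceVariance_div_eq (tstar : ℝ) {M Δt : ℝ} (hM : 0 < M) (hΔt : 0 < Δt) :
    brownianDifferenceVariance ε vt tstar M Δt / Δt =
      2 * tstar * (√(diffusionCoeff ε vt Δt / Δt) - √(diffusionCoeff ε vt (M * Δt) / Δt)) ^ 2 := by
  have hfine := diffusionCoeff_nonneg (ε := ε) (vt := vt) hΔt.le
  have hcoarse := diffusionCoeff_nonneg (ε := ε) (vt := vt) (mul_pos hM hΔt).le
  rw [brownianDifferenceVariance, add_sub_two_mul_sqrt_mul hfine hcoarse,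
    ← sq_sqrt_sub_sqrt_div _ _ hΔt.le]
  field_simp

end

theorem brownian_difference_variance_rate_general (ε vt tstar : ℝ)
    (hε : 0 < ε) (M : ℕ) (hM : 1 ≤ M) :
    Tendsto (fun Δt : ℝ =>
        (tstar / (M * Δt) *
          (2 * M * Δt *
            (vt ^ 2 * Δt / (ε ^ 2 + Δt) + vt ^ 2 * (M * Δt) / (ε ^ 2 + M * Δt)
              - 2 * Real.sqrt ((vt ^ 2 * Δt / (ε ^ 2 + Δt))
                  * (vt ^ 2 * (M * Δt) / (ε ^ 2 + M * Δt)))))) / Δt)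
      (nhdsWithin 0 (Set.Ioi 0))
      (nhds (2 * tstar * vt ^ 2 / ε ^ 2 * (Real.sqrt M - 1) ^ 2)) := by
  change Tendsto (fun Δt => brownianDifferenceVariance ε vt tstar M Δt / Δt) _ _
  have hM₀ : (0 : ℝ) < M := by exact_mod_cast hM
  have hfine : Tendsto (fun h => diffusionCoeff ε vt h / h) (𝓝[≠] 0) (𝓝 (vt ^ 2 / ε ^ 2)) := by
    simpa using tendsto_diffusionCoeff_mul_div (vt := vt) hε.ne' 1
  have hcoarse := tendsto_diffusionCoeff_mul_div (vt := vt) hε.ne' M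
  have hlim := ((hfine.sqrt.sub hcoarse.sqrt).pow 2).const_mul (2 * tstar)
  rw [sqrt_sub_sqrt_mul_sq (by positivity) hM₀.le] at hlim
  rw [show 2 * tstar * vt ^ 2 / ε ^ 2 * (√M - 1) ^ 2 = 2 * tstar * (vt ^ 2 / ε ^ 2 * (√M - 1) ^ 2)
    by ring]
  refine (hlim.mono_left (nhdsWithin_mono _ fun _ hx => ne_of_gt hx)).congr' ?_
  filter_upwards [self_mem_nhdsWithin] with Δt hΔt
  exact (brownianDifferenceVariance_div_eq tstar hM₀ hΔt).symm

/-- With `D(s) = ṽ²s/(ε²+s)` and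
`V_W(Δt) = (t*/(MΔt)) · 2MΔt · (D(Δt) + D(MΔt) − 2√(D(Δt)·D(MΔt)))`,
the variance of the summed differences of coupled Brownian increments over
`N = t*/(MΔt)` coarse steps, one has
`lim_{Δt→0⁺} V_W(Δt)/Δt = (2t*ṽ²/ε²)·(√M − 1)²`. -/
theorem brownian_difference_variance_rate (ε vt tstar : ℝ)
    (hε : 0 < ε) (hvt : 0 < vt) (ht : 0 < tstar) (M : ℕ) (hM : 1 ≤ M) :
    Tendsto (fun Δt : ℝ =>
        (tstar / (M * Δt) *
          (2 * M * Δt *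
            (vt ^ 2 * Δt / (ε ^ 2 + Δt) + vt ^ 2 * (M * Δt) / (ε ^ 2 + M * Δt)
              - 2 * Real.sqrt ((vt ^ 2 * Δt / (ε ^ 2 + Δt))
                  * (vt ^ 2 * (M * Δt) / (ε ^ 2 + M * Δt)))))) / Δt)
      (nhdsWithin 0 (Set.Ioi 0))
      (nhds (2 * tstar * vt ^ 2 / ε ^ 2 * (Real.sqrt M - 1) ^ 2)) :=
  brownian_difference_variance_rate_general ε vt tstar hε M hM
end

section
/- Let ε > 0, ṽ > 0, Δt > 0 and let M ≥ 1 be an integer, and set p = ε²/(ε²+Δt) and ṽ_f = εṽ/(ε²+Δt). Then Δt²·ṽ_f² · ( M + Σ_{k=1}^{M−1} (M − k)·(p^k + p^{−k}) ) = ε²·ṽ²·( p^{1−M} + p^{M+1} − 2p ). Consequently, for every integer Δn ≥ 1, the sum over all pairs (m, m′) ∈ {0,…,M−1}² of the covariances Δt²ṽ_f²·p^{MΔn + m′ − m} between fine transport increments in coarse steps n and n+Δn equals ε²ṽ²(p^{1−M} + p^{M+1} − 2p)·p^{MΔn}. -/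
/-!
Both identities reduce to the double sum `T = ∑_{m, m' < M} p^(m' - m)`. Grouping its terms
along the diagonals `m' - m = ±k` gives the Toeplitz form
`M + ∑_{k=1}^{M-1} (M - k)(p^k + p^(-k))`, while factoring it as `p^(1-M) (∑_{i<M} p^i)^2` and
summing the geometric series gives `(1 - p)^2 T = p^(1-M) (1 - p^M)^2 = p^(1-M) + p^(M+1) - 2p`.
Finally `Δt ṽ_f = εṽ (1 - p)`, and the covariances across coarse steps are `p^(MΔn)` times the
terms of `T`.
-/

open Finset

theorem sum_range_sum_range_sub_succ {A : Type*} [AddCommGroup A] (f : ℤ → A) (M : ℕ) :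
    ∑ m ∈ range (M + 1), ∑ m' ∈ range (M + 1), f (m' - m)
      = ∑ m ∈ range M, ∑ m' ∈ range M, f (m' - m)
        + ∑ k ∈ range M, (f (k + 1) + f (-(k + 1))) + f 0 := by
  have top : ∑ m ∈ range M, f (M - m) = ∑ k ∈ range M, f (k + 1) := by
    rw [← sum_range_reflect]
    refine sum_congr rfl fun m hm => congrArg f ?_
    have := mem_range.1 hm
    omega
  have bot : ∑ m' ∈ range M, f (m' - M) = ∑ k ∈ range M, f (-(k + 1)) := by
    rw [← sum_range_reflect]
    refine sum_congr rfl fun m hm => congrArg f ?_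
    have := mem_range.1 hm
    omega
  simp only [sum_range_succ, sum_add_distrib, top, bot, sub_self]
  abel

section Toeplitz

variable {R : Type*} [CommRing R] (f : ℤ → R)

theorem sum_range_sum_range_sub_add (M : ℕ) :
    ∑ m ∈ range M, ∑ m' ∈ range M, f (m' - m) + M * f 0
      = ∑ k ∈ range M, ((M : R) - k) * (f k + f (-k)) := by
  induction M with
  | zero => simp
  | succ M ih =>
    have coeff (k : ℕ) : (((M + 1 : ℕ) : R) - k) * (f k + f (-k))
        = (M - k) * (f k + f (-k)) + (f k + f (-k)) := by rw [Nat.cast_succ]; ring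
    rw [sum_congr rfl fun k _ => coeff k, sum_add_distrib,
      sum_range_succ (fun k : ℕ => ((M : R) - k) * (f k + f (-k))), ← ih,
      sum_range_succ' (fun k : ℕ => f k + f (-k)), sum_range_sum_range_sub_succ]
    push_cast
    rw [sub_self, zero_mul, neg_zero]
    ring

theorem sum_range_sum_range_sub (M : ℕ) :
    ∑ m ∈ range M, ∑ m' ∈ range M, f (m' - m)
      = M * f 0 + ∑ k ∈ Icc 1 (M - 1), ((M : R) - k) * (f k + f (-k)) := by
  rcases M with _ | N
  · simp
  · have h := sum_range_sum_range_sub_add f (N + 1)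
    rw [sum_range_eq_add_Ico (fun k : ℕ => (((N + 1 : ℕ) : R) - k) * (f k + f (-k)))
      N.succ_pos] at h
    rw [Nat.add_sub_cancel, ← Ico_add_one_right_eq_Icc]
    push_cast at h ⊢
    simp only [Nat.succ_eq_add_one, sub_zero, neg_zero] at h
    linear_combination h

end Toeplitz

section Geometric

variable {K : Type*} [Field K] {p : K}

theorem sum_range_sum_range_zpow_sub (hp : p ≠ 0) (M : ℕ) :
    ∑ m ∈ range M, ∑ m' ∈ range M, p ^ ((m' : ℤ) - m)
      = p ^ (1 - (M : ℤ)) * (∑ i ∈ range M, p ^ i) ^ 2 := by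
  rw [sq]
  nth_rewrite 1 [← sum_range_reflect]
  rw [sum_mul_sum, mul_sum]
  refine sum_congr rfl fun m hm => ?_
  rw [mul_sum]
  refine sum_congr rfl fun m' _ => ?_
  have := mem_range.1 hm
  rw [← zpow_natCast, ← zpow_natCast, ← zpow_add₀ hp, ← zpow_add₀ hp]
  congr 1
  have : ((M - 1 - m : ℕ) : ℤ) = M - 1 - m := by omega
  push_cast [this]
  ring

theorem one_sub_sq_mul_sum_range_sum_range_zpow_sub (hp : p ≠ 0) (M : ℕ) :
    (1 - p) ^ 2 * ∑ m ∈ range M, ∑ m' ∈ range M, p ^ ((m' : ℤ) - m)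
      = p ^ (1 - (M : ℤ)) + p ^ ((M : ℤ) + 1) - 2 * p := by
  have h1 : p ^ (1 - (M : ℤ)) * p ^ M = p := by
    rw [← zpow_natCast, ← zpow_add₀ hp, sub_add_cancel, zpow_one]
  have h2 : p ^ (1 - (M : ℤ)) * (p ^ M) ^ 2 = p ^ ((M : ℤ) + 1) := by
    rw [← pow_mul, ← zpow_natCast, ← zpow_add₀ hp]
    congr 1; push_cast; ring
  calc (1 - p) ^ 2 * ∑ m ∈ range M, ∑ m' ∈ range M, p ^ ((m' : ℤ) - m)
      = p ^ (1 - (M : ℤ)) * ((1 - p) * ∑ i ∈ range M, p ^ i) ^ 2 := by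
        rw [sum_range_sum_range_zpow_sub hp]; ring
    _ = p ^ (1 - (M : ℤ)) * (1 - p ^ M) ^ 2 := by rw [mul_neg_geom_sum]
    _ = p ^ (1 - (M : ℤ)) + p ^ ((M : ℤ) + 1) - 2 * p := by linear_combination h2 - 2 * h1

end Geometric

theorem covariance_sum_transport_fine_across_steps_general (ε vt Δt : ℝ)
    (hε : 0 < ε) (hΔt : 0 < Δt) (M : ℕ)
    (p vf : ℝ)
    (hp : p = ε ^ 2 / (ε ^ 2 + Δt))
    (hvf : vf = ε * vt / (ε ^ 2 + Δt)) :
    (Δt ^ 2 * vf ^ 2 *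
        ((M : ℝ) + ∑ k ∈ Finset.Icc 1 (M - 1),
            ((M : ℝ) - k) * (p ^ (k : ℤ) + p ^ (-(k : ℤ))))
      = ε ^ 2 * vt ^ 2 * (p ^ (1 - (M : ℤ)) + p ^ ((M : ℤ) + 1) - 2 * p))
    ∧ ∀ Δn : ℕ, 1 ≤ Δn →
        ∑ m ∈ Finset.range M, ∑ m' ∈ Finset.range M,
            Δt ^ 2 * vf ^ 2 * p ^ ((M : ℤ) * Δn + m' - m)
          = ε ^ 2 * vt ^ 2 * (p ^ (1 - (M : ℤ)) + p ^ ((M : ℤ) + 1) - 2 * p)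
              * p ^ ((M : ℤ) * Δn) := by
  have hp0 : p ≠ 0 := by rw [hp]; positivity
  have hvf_sq : Δt ^ 2 * vf ^ 2 = ε ^ 2 * vt ^ 2 * (1 - p) ^ 2 := by
    rw [hp, hvf]
    field_simp
    ring
  have hdouble := one_sub_sq_mul_sum_range_sum_range_zpow_sub hp0 M
  have htoeplitz := sum_range_sum_range_sub (fun k : ℤ => p ^ k) M
  simp only [zpow_zero, mul_one] at htoeplitz
  refine ⟨?_, fun Δn _ => ?_⟩
  · rw [← htoeplitz, hvf_sq, ← hdouble]
    ring
  · calc _ = Δt ^ 2 * vf ^ 2 * ∑ m ∈ range M, ∑ m' ∈ range M,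
            p ^ ((M : ℤ) * Δn) * p ^ ((m' : ℤ) - m) := by
          simp_rw [mul_sum, ← zpow_add₀ hp0, add_sub_assoc]
      _ = _ := by simp_rw [← mul_sum]; rw [hvf_sq, ← hdouble]; ring

/-- With `p = ε²/(ε²+Δt)` and `ṽ_f = εṽ/(ε²+Δt)`, one has
`Δt²·ṽ_f²·(M + Σ_{k=1}^{M−1} (M − k)·(p^k + p^{−k})) = ε²·ṽ²·(p^{1−M} + p^{M+1} − 2p)`,
and consequently, for every integer `Δn ≥ 1`, the sum over all pairs
`(m, m') ∈ {0,…,M−1}²` of the covariances `Δt²ṽ_f²·p^{MΔn + m' − m}` between fine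
transport increments in coarse steps `n` and `n + Δn` equals
`ε²ṽ²(p^{1−M} + p^{M+1} − 2p)·p^{MΔn}`. -/
theorem covariance_sum_transport_fine_across_steps (ε vt Δt : ℝ)
    (hε : 0 < ε) (hvt : 0 < vt) (hΔt : 0 < Δt) (M : ℕ) (hM : 1 ≤ M)
    (p vf : ℝ)
    (hp : p = ε ^ 2 / (ε ^ 2 + Δt))
    (hvf : vf = ε * vt / (ε ^ 2 + Δt)) :
    (Δt ^ 2 * vf ^ 2 *
        ((M : ℝ) + ∑ k ∈ Finset.Icc 1 (M - 1),
            ((M : ℝ) - k) * (p ^ (k : ℤ) + p ^ (-(k : ℤ))))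
      = ε ^ 2 * vt ^ 2 * (p ^ (1 - (M : ℤ)) + p ^ ((M : ℤ) + 1) - 2 * p))
    ∧ ∀ Δn : ℕ, 1 ≤ Δn →
        ∑ m ∈ Finset.range M, ∑ m' ∈ Finset.range M,
            Δt ^ 2 * vf ^ 2 * p ^ ((M : ℤ) * Δn + m' - m)
          = ε ^ 2 * vt ^ 2 * (p ^ (1 - (M : ℤ)) + p ^ ((M : ℤ) + 1) - 2 * p)
              * p ^ ((M : ℤ) * Δn) :=
  covariance_sum_transport_fine_across_steps_general ε vt Δt hε hΔt M p vf hp hvf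
end

section
/- Let ε > 0, Δt > 0 and let M ≥ 1 be an integer, and set p = ε²/(ε²+Δt) and q = ε²/(ε²+MΔt). Then for every integer Δn ≥ 1, Σ_{m=0}^{M−1} [ p^M + (p^m − p^M)·(q − p^M)/(1 − p^M) + p^{M−m} − p^M ] · ((1 − q)/(1 − p^M)) · q^{Δn−1} = (MΔt/ε²) · ( ((q − p^M)/(1 − p^M))·( (ε²+Δt)/Δt − M·p^M/(1 − p^M) ) + ε²/Δt ) · q^{Δn}. (This evaluates the sum over the M fine substeps of the correlation probabilities between the fine velocities in coarse step n and the coarse velocity in a later coarse step n + Δn.) -/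
/-!
Each summand splits as `p ^ m * c + p ^ (M - m) - p ^ M * c` with `c = (q - p ^ M) / (1 - p ^ M)`,
and `∑ p ^ (M - m)` is the geometric sum `∑ p ^ m = (1 - p ^ M) / (1 - p)` shifted by one power.
The closed form then follows from `1 - q = (M Δt / ε²) q`, `1 / (1 - p) = (ε² + Δt) / Δt` and
`p / (1 - p) = ε² / Δt`.
-/

open Finset

section CommRing

variable {R : Type*} [CommRing R]

theorem sum_range_pow_sub_eq_mul_geom_sum (p : R) (M : ℕ) :
    ∑ m ∈ range M, p ^ (M - m) = p * ∑ m ∈ range M, p ^ m := by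
  rw [mul_sum, ← sum_range_reflect]
  refine sum_congr rfl fun m hm => ?_
  rw [← pow_succ']
  congr 1
  have := mem_range.mp hm
  omega

theorem sum_range_correlation_weight (p c : R) (M : ℕ) :
    ∑ m ∈ range M, (p ^ M + (p ^ m - p ^ M) * c + p ^ (M - m) - p ^ M)
      = (c + p) * ∑ m ∈ range M, p ^ m - M * p ^ M * c := by
  simp only [sum_add_distrib, ← sum_mul, sum_range_pow_sub_eq_mul_geom_sum,
    sum_sub_distrib, sum_const, card_range, nsmul_eq_mul]
  ring

end CommRing

/-- With `p = ε²/(ε²+Δt)` and `q = ε²/(ε²+MΔt)`, for every integer `Δn ≥ 1`,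
the sum over the `M` fine substeps of the correlation probabilities between the fine
velocities in coarse step `n` and the coarse velocity in coarse step `n + Δn`
evaluates as
`Σ_{m=0}^{M−1} [p^M + (p^m − p^M)·(q − p^M)/(1 − p^M) + p^{M−m} − p^M]·((1−q)/(1−p^M))·q^{Δn−1}
  = (MΔt/ε²)·( ((q − p^M)/(1 − p^M))·((ε²+Δt)/Δt − M·p^M/(1 − p^M)) + ε²/Δt )·q^{Δn}`. -/
theorem correlation_probability_sum_coarse_fine_velocities (ε Δt : ℝ)
    (hε : 0 < ε) (hΔt : 0 < Δt) (M : ℕ) (hM : 1 ≤ M)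
    (p q : ℝ)
    (hp : p = ε ^ 2 / (ε ^ 2 + Δt))
    (hq : q = ε ^ 2 / (ε ^ 2 + M * Δt))
    (Δn : ℕ) (hΔn : 1 ≤ Δn) :
    ∑ m ∈ Finset.range M,
        (p ^ M + (p ^ m - p ^ M) * (q - p ^ M) / (1 - p ^ M) + p ^ (M - m) - p ^ M)
          * ((1 - q) / (1 - p ^ M)) * q ^ (Δn - 1)
      = M * Δt / ε ^ 2 *
          ((q - p ^ M) / (1 - p ^ M)
              * ((ε ^ 2 + Δt) / Δt - M * p ^ M / (1 - p ^ M)) + ε ^ 2 / Δt)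
          * q ^ Δn := by
  obtain ⟨k, rfl⟩ : ∃ k, Δn = k + 1 := ⟨Δn - 1, by omega⟩
  have hp1 : p < 1 := by rw [hp, div_lt_one (by positivity)]; linarith
  have hpM : p ^ M < 1 := pow_lt_one₀ (by rw [hp]; positivity) hp1 (by omega)
  have h1p : 1 - p = Δt / (ε ^ 2 + Δt) := by
    rw [hp, one_sub_div (by positivity), add_sub_cancel_left]
  have hinv : (ε ^ 2 + Δt) / Δt = (1 - p)⁻¹ := by rw [h1p, inv_div]
  have hodds : ε ^ 2 / Δt = p / (1 - p) := by
    rw [h1p, hp, div_div_div_cancel_right₀ (by positivity)]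
  have h1q : 1 - q = M * Δt / ε ^ 2 * q := by rw [hq]; field_simp; ring
  have h1p_ne : 1 - p ≠ 0 := by linarith
  have h1pM_ne : 1 - p ^ M ≠ 0 := by linarith
  have hgeom : ∑ m ∈ range M, p ^ m = (1 - p ^ M) / (1 - p) :=
    eq_div_of_mul_eq h1p_ne (geom_sum_mul_neg p M)
  simp_rw [mul_div_assoc (p ^ _ - p ^ M), ← sum_mul, sum_range_correlation_weight, hgeom,
    add_tsub_cancel_right, h1q, hinv, hodds, pow_succ]
  field_simp
  ring
end

section
/- Fix reals ε > 0, ṽ > 0, t* > 0 and an integer M ≥ 1. For an integer N ≥ 1 set Δt = t*/(MN), p = ε²/(ε²+Δt), q = ε²/(ε²+MΔt), ṽ_f = εṽ/(ε²+Δt), ṽ_c = εṽ/(ε²+MΔt), and define σ₁ = ε²ṽ²·(p^{1−M} + p^{M+1} − 2p) − M²Δt²ṽ_c², σ₂ = M²Δt²ṽ_c²·( 1 − (Δt·ṽ_f/(ε²·ṽ_c))·( ((q − p^M)/(1 − p^M))·( (ε²+Δt)/Δt − M·p^M/(1 − p^M) ) + ε²/Δt ) ), and the total transport-difference variance V_T(N)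 = N·( M·Δt²·ṽ_f² − M²·Δt²·ṽ_c² + 2ε²·ṽ_f²·( MΔt − (ε²+Δt)(1 − p^M) ) ) + 2·( σ₁·p^M·(p^{MN} − N·p^M + N − 1)/(1 − p^M)² + σ₂·q·(q^N − N·q + N − 1)/(1 − q)² ). Then lim_{N → ∞} V_T(N)/Δt = 2ṽ²·(M − 1)·( e^{−t*/ε²} − 1 + t*/ε² ); in particular V_T(N) converges to 0 at rate O(Δt) as Δt = t*/(MN) → 0. -/
/-!
Put `p = ε²/(ε²+Δt)`, so that `Δt = ε²(1-p)/p`, and split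
`V_T(N)/Δt = NΔt · A(Δt) + 2 (B(Δt) β(p^M, N) + C(Δt) β(q, N))` with `β(P, N) = P^N - NP + N - 1`,
`A = (per-step variance)/Δt²`, `B = σ₁p^M/((1-p^M)²Δt)` and `C = σ₂q/((1-q)²Δt)`.
Since `NΔt = t*/M` while `N(1-p^M)` and `N(1-q)` tend to `t*/ε²`, both `β` tend to
`e^{-t*/ε²} - 1 + t*/ε²`. The coefficients look singular at `Δt = 0`, but once
`1 - p^M = (1-p) Σ_{i<M} p^i` and `M - Σ_{i<M} p^i = (1-p) Σ_{i<M} Σ_{j<i} p^j` are used, they are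
rational functions of `p` and these two polynomials that are continuous at `p = 1`, with values
`0`, `2(M-1)ṽ²` and `-(M-1)ṽ²`; the limit is `2(2(M-1) - (M-1))ṽ²(e^{-t*/ε²} - 1 + t*/ε²)`.
-/

open Finset Filter Topology

noncomputable section

def iteratedGeomSum (n : ℕ) (p : ℝ) : ℝ := ∑ i ∈ range n, ∑ j ∈ range i, p ^ j

theorem iteratedGeomSum_eq {p : ℝ} (hp : p ≠ 1) (n : ℕ) :
    iteratedGeomSum n p = (n - ∑ i ∈ range n, p ^ i) / (1 - p) := by
  rw [eq_div_iff (sub_ne_zero.mpr hp.symm), iteratedGeomSum, sum_mul]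
  simp only [geom_sum_mul_neg, sum_sub_distrib, sum_const, card_range, nsmul_eq_mul, mul_one]

theorem iteratedGeomSum_one (n : ℕ) : iteratedGeomSum n 1 = n * (n - 1) / 2 := by
  simp only [iteratedGeomSum, one_pow, sum_const, card_range, nsmul_eq_mul, mul_one]
  induction n with
  | zero => simp
  | succ n ih => rw [sum_range_succ, ih]; push_cast; ring

@[fun_prop]
theorem continuous_iteratedGeomSum (n : ℕ) : Continuous (iteratedGeomSum n) := by
  unfold iteratedGeomSum; fun_prop

theorem tendsto_pow_sub_nat_mul_add_nat_sub_one {P : ℕ → ℝ} {c : ℝ}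
    (h : Tendsto (fun n : ℕ => n * (1 - P n)) atTop (𝓝 c)) :
    Tendsto (fun n : ℕ => P n ^ n - n * P n + n - 1) atTop (𝓝 (Real.exp (-c) - 1 + c)) := by
  have hpow : Tendsto (fun n : ℕ => P n ^ n) atTop (𝓝 (Real.exp (-c))) := by
    have h' : Tendsto (fun n : ℕ => n * (P n - 1)) atTop (𝓝 (-c)) :=
      h.neg.congr fun n => by ring
    simpa using Real.tendsto_one_add_pow_exp_of_tendsto h'
  exact ((hpow.sub_const 1).add h).congr fun n => by ring

namespace CoupledTransport

/-! With fine step `Δt`: `p = noCollisionProb ε Δt`, `q = noCollisionProb ε (M * Δt)`,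
`ṽ_f = charVelocity ε vt Δt`, `ṽ_c = charVelocity ε vt (M * Δt)`. -/

def noCollisionProb (ε Δt : ℝ) : ℝ := ε ^ 2 / (ε ^ 2 + Δt)

def charVelocity (ε vt Δt : ℝ) : ℝ := ε * vt / (ε ^ 2 + Δt)

section

variable (ε vt : ℝ) (M : ℕ)

def stepVariance (Δt : ℝ) : ℝ :=
  let p := noCollisionProb ε Δt
  let vf := charVelocity ε vt Δt
  let vc := charVelocity ε vt (M * Δt)
  M * Δt ^ 2 * vf ^ 2 - M ^ 2 * Δt ^ 2 * vc ^ 2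
    + 2 * ε ^ 2 * vf ^ 2 * (M * Δt - (ε ^ 2 + Δt) * (1 - p ^ M))

def sigma1 (Δt : ℝ) : ℝ :=
  let p := noCollisionProb ε Δt
  let vc := charVelocity ε vt (M * Δt)
  ε ^ 2 * vt ^ 2 * (p ^ (1 - (M : ℤ)) + p ^ ((M : ℤ) + 1) - 2 * p) - M ^ 2 * Δt ^ 2 * vc ^ 2

def sigma2 (Δt : ℝ) : ℝ :=
  let p := noCollisionProb ε Δt
  let q := noCollisionProb ε (M * Δt)
  let vf := charVelocity ε vt Δt
  let vc := charVelocity ε vt (M * Δt)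
  M ^ 2 * Δt ^ 2 * vc ^ 2 *
    (1 - Δt * vf / (ε ^ 2 * vc) *
      ((q - p ^ M) / (1 - p ^ M) * ((ε ^ 2 + Δt) / Δt - M * p ^ M / (1 - p ^ M)) + ε ^ 2 / Δt))

def transportVariance (N : ℕ) (Δt : ℝ) : ℝ :=
  let p := noCollisionProb ε Δt
  let q := noCollisionProb ε (M * Δt)
  N * stepVariance ε vt M Δt
    + 2 * (sigma1 ε vt M Δt * p ^ M * (p ^ (M * N) - N * p ^ M + N - 1) / (1 - p ^ M) ^ 2
      + sigma2 ε vt M Δt * q * (q ^ N - N * q + N - 1) / (1 - q) ^ 2)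

end

theorem transportVariance_div (ε vt : ℝ) (M N : ℕ) {Δt : ℝ} (hΔt : Δt ≠ 0) :
    transportVariance ε vt M N Δt / Δt
      = N * Δt * (stepVariance ε vt M Δt / Δt ^ 2)
        + 2 * (sigma1 ε vt M Δt * noCollisionProb ε Δt ^ M
              / ((1 - noCollisionProb ε Δt ^ M) ^ 2 * Δt)
            * ((noCollisionProb ε Δt ^ M) ^ N - N * noCollisionProb ε Δt ^ M + N - 1)
          + sigma2 ε vt M Δt * noCollisionProb ε (M * Δt)
              / ((1 - noCollisionProb ε (M * Δt)) ^ 2 * Δt)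
            * (noCollisionProb ε (M * Δt) ^ N - N * noCollisionProb ε (M * Δt) + N - 1)) := by
  rw [transportVariance, ← pow_mul]
  field_simp

section

variable {ε : ℝ}

theorem noCollisionProb_pos (hε : ε ≠ 0) {Δt : ℝ} (hΔt : 0 ≤ Δt) :
    0 < noCollisionProb ε Δt := by
  unfold noCollisionProb; positivity

theorem noCollisionProb_lt_one (hε : ε ≠ 0) {Δt : ℝ} (hΔt : 0 < Δt) :
    noCollisionProb ε Δt < 1 := by
  rw [noCollisionProb, div_lt_one (by positivity)]; linarith

theorem one_sub_noCollisionProb {Δt : ℝ} (h : ε ^ 2 + Δt ≠ 0) :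
    1 - noCollisionProb ε Δt = Δt / (ε ^ 2 + Δt) := by
  rw [noCollisionProb]; field_simp; ring

theorem sq_mul_one_sub_noCollisionProb_div (hε : ε ≠ 0) {Δt : ℝ} (h : ε ^ 2 + Δt ≠ 0) :
    ε ^ 2 * (1 - noCollisionProb ε Δt) / noCollisionProb ε Δt = Δt := by
  rw [one_sub_noCollisionProb h, noCollisionProb]; field_simp

theorem noCollisionProb_mul {Δt : ℝ} (h : ε ^ 2 + Δt ≠ 0) (c : ℝ) :
    noCollisionProb ε (c * Δt)
      = noCollisionProb ε Δt / (noCollisionProb ε Δt + c * (1 - noCollisionProb ε Δt)) := by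
  rw [one_sub_noCollisionProb h, noCollisionProb, noCollisionProb]
  field_simp

theorem charVelocity_eq (hε : ε ≠ 0) (vt Δt : ℝ) :
    charVelocity ε vt Δt = vt / ε * noCollisionProb ε Δt := by
  rw [charVelocity, noCollisionProb]; field_simp

theorem tendsto_noCollisionProb (hε : ε ≠ 0) : Tendsto (noCollisionProb ε) (𝓝 0) (𝓝 1) := by
  have hE : ε ^ 2 ≠ 0 := by positivity
  have : ContinuousAt (noCollisionProb ε) 0 := by
    unfold noCollisionProb; fun_prop (disch := simpa using hE)
  simpa [noCollisionProb, hE] using this.tendsto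

theorem tendsto_nat_mul_one_sub_noCollisionProb_pow (hε : ε ≠ 0) {Δt : ℕ → ℝ} {τ : ℝ}
    (hΔt : Tendsto Δt atTop (𝓝 0)) (hτ : ∀ᶠ N in atTop, N * Δt N = τ) (k : ℕ) :
    Tendsto (fun N : ℕ => N * (1 - noCollisionProb ε (Δt N) ^ k)) atTop
      (𝓝 (k * τ / ε ^ 2)) := by
  have hE : ε ^ 2 ≠ 0 := by positivity
  have hlim : Tendsto (fun N => τ / (ε ^ 2 + Δt N) * ∑ i ∈ range k, noCollisionProb ε (Δt N) ^ i)
      atTop (𝓝 (τ / (ε ^ 2 + 0) * ∑ i ∈ range k, (1 : ℝ) ^ i)) :=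
    (tendsto_const_nhds.div (tendsto_const_nhds.add hΔt) (by simpa using hE)).mul
      (tendsto_finsetSum _ fun i _ => ((tendsto_noCollisionProb hε).comp hΔt).pow i)
  rw [show τ / (ε ^ 2 + 0) * ∑ i ∈ range k, (1 : ℝ) ^ i = k * τ / ε ^ 2 by simp; ring] at hlim
  refine hlim.congr' ?_
  filter_upwards [hτ, (hΔt.const_add (ε ^ 2)).eventually_ne (show ε ^ 2 + 0 ≠ 0 by simpa)]
    with N hN hNE
  rw [← mul_neg_geom_sum, one_sub_noCollisionProb hNE, ← hN]
  ring

theorem tendsto_nhdsWithin_of_eq_comp_noCollisionProb (hε : ε ≠ 0) {f g : ℝ → ℝ}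
    (hg : ContinuousAt g 1) (hfg : ∀ Δt, 0 < Δt → f Δt = g (noCollisionProb ε Δt)) :
    Tendsto f (𝓝[>] 0) (𝓝 (g 1)) :=
  (hg.tendsto.comp ((tendsto_noCollisionProb hε).mono_left nhdsWithin_le_nhds)).congr'
    ((eventually_nhdsWithin_of_forall (s := Set.Ioi 0) hfg).mono fun _ h => h.symm)

end

/-! `A / (ṽ²/ε²)`, `B / ṽ²` and `C / ṽ²` written in `p`, where `p + M(1-p) = p/q`. -/

section

variable (M : ℕ) (p : ℝ)

def rescaledStepVariance : ℝ :=
  M * p ^ 2 - M ^ 2 * (p / (p + M * (1 - p))) ^ 2 + 2 * p ^ 3 * iteratedGeomSum M p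

def rescaledFineCovariance : ℝ :=
  let S := ∑ i ∈ range M, p ^ i
  let r := p + M * (1 - p)
  (-(iteratedGeomSum M p + S) * (p * S + M)
    + M ^ 2 * (S + p ^ M + (M - 1) * (2 + (M - 1) * (1 - p))) / r ^ 2) / S ^ 2

def rescaledCoarseCovariance : ℝ :=
  let S := ∑ i ∈ range M, p ^ i
  let r := p + M * (1 - p)
  (1 - M) * p ^ 2 / r - p * (S - M / r) * (M * S - iteratedGeomSum M p) / S ^ 2

theorem continuousAt_rescaledStepVariance : ContinuousAt (rescaledStepVariance M) 1 := by
  unfold rescaledStepVariance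
  fun_prop (disch := norm_num)

theorem rescaledStepVariance_one : rescaledStepVariance M 1 = 0 := by
  simp [rescaledStepVariance, iteratedGeomSum_one]
  ring

theorem continuousAt_rescaledFineCovariance (hM : M ≠ 0) :
    ContinuousAt (rescaledFineCovariance M) 1 := by
  unfold rescaledFineCovariance
  fun_prop (disch := simp [hM])

theorem rescaledFineCovariance_one (hM : M ≠ 0) : rescaledFineCovariance M 1 = 2 * (M - 1) := by
  simp [rescaledFineCovariance, iteratedGeomSum_one]
  field_simp
  ring

theorem continuousAt_rescaledCoarseCovariance (hM : M ≠ 0) :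
    ContinuousAt (rescaledCoarseCovariance M) 1 := by
  unfold rescaledCoarseCovariance
  fun_prop (disch := simp [hM])

theorem rescaledCoarseCovariance_one : rescaledCoarseCovariance M 1 = 1 - M := by
  simp [rescaledCoarseCovariance]

end

section

variable {ε : ℝ} (vt : ℝ) {M : ℕ}

theorem stepVariance_div_sq (hε : ε ≠ 0) {Δt : ℝ} (hΔt : 0 < Δt) :
    stepVariance ε vt M Δt / Δt ^ 2
      = vt ^ 2 / ε ^ 2 * rescaledStepVariance M (noCollisionProb ε Δt) := by
  have hp0 := noCollisionProb_pos hε hΔt.le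
  have hp1 := noCollisionProb_lt_one hε hΔt
  have hΔt_eq := sq_mul_one_sub_noCollisionProb_div hε (by positivity : ε ^ 2 + Δt ≠ 0)
  rw [stepVariance, rescaledStepVariance, charVelocity_eq hε, charVelocity_eq hε,
    noCollisionProb_mul (by positivity)]
  generalize noCollisionProb ε Δt = p at *
  subst hΔt_eq
  have hr : p + M * (1 - p) ≠ 0 :=
    (add_pos_of_pos_of_nonneg hp0 (mul_nonneg M.cast_nonneg (by linarith))).ne'
  have h1p : 1 - p ≠ 0 := by linarith
  have hp1' : p - 1 ≠ 0 := by linarith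
  rw [iteratedGeomSum_eq hp1.ne, geom_sum_eq hp1.ne]
  field_simp
  ring

theorem sigma1_mul_div (hε : ε ≠ 0) (hM : M ≠ 0) {Δt : ℝ} (hΔt : 0 < Δt) :
    sigma1 ε vt M Δt * noCollisionProb ε Δt ^ M / ((1 - noCollisionProb ε Δt ^ M) ^ 2 * Δt)
      = vt ^ 2 * rescaledFineCovariance M (noCollisionProb ε Δt) := by
  have hp0 := noCollisionProb_pos hε hΔt.le
  have hp1 := noCollisionProb_lt_one hε hΔt
  have hΔt_eq := sq_mul_one_sub_noCollisionProb_div hε (by positivity : ε ^ 2 + Δt ≠ 0)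
  rw [sigma1, rescaledFineCovariance, charVelocity_eq hε, noCollisionProb_mul (by positivity)]
  generalize noCollisionProb ε Δt = p at *
  subst hΔt_eq
  have hr : p + M * (1 - p) ≠ 0 :=
    (add_pos_of_pos_of_nonneg hp0 (mul_nonneg M.cast_nonneg (by linarith))).ne'
  have h1p : 1 - p ≠ 0 := by linarith
  have hp1' : p - 1 ≠ 0 := by linarith
  have h1pM : 1 - p ^ M ≠ 0 := sub_ne_zero.mpr (pow_lt_one₀ hp0.le hp1 hM).ne'
  have hpM1 : p ^ M - 1 ≠ 0 := sub_ne_zero.mpr (pow_lt_one₀ hp0.le hp1 hM).ne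
  rw [iteratedGeomSum_eq hp1.ne, geom_sum_eq hp1.ne, zpow_sub₀ hp0.ne', zpow_add₀ hp0.ne',
    zpow_natCast, zpow_one]
  field_simp
  ring

theorem sigma2_mul_div (hε : ε ≠ 0) (hvt : vt ≠ 0) (hM : M ≠ 0) {Δt : ℝ} (hΔt : 0 < Δt) :
    sigma2 ε vt M Δt * noCollisionProb ε (M * Δt) / ((1 - noCollisionProb ε (M * Δt)) ^ 2 * Δt)
      = vt ^ 2 * rescaledCoarseCovariance M (noCollisionProb ε Δt) := by
  have hp0 := noCollisionProb_pos hε hΔt.le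
  have hp1 := noCollisionProb_lt_one hε hΔt
  have hΔt_eq := sq_mul_one_sub_noCollisionProb_div hε (by positivity : ε ^ 2 + Δt ≠ 0)
  rw [sigma2, rescaledCoarseCovariance, charVelocity_eq hε, charVelocity_eq hε,
    noCollisionProb_mul (by positivity)]
  generalize noCollisionProb ε Δt = p at *
  subst hΔt_eq
  have hr : p + M * (1 - p) ≠ 0 :=
    (add_pos_of_pos_of_nonneg hp0 (mul_nonneg M.cast_nonneg (by linarith))).ne'
  have h1p : 1 - p ≠ 0 := by linarith
  have hp1' : p - 1 ≠ 0 := by linarith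
  have h1pM : 1 - p ^ M ≠ 0 := sub_ne_zero.mpr (pow_lt_one₀ hp0.le hp1 hM).ne'
  have hpM1 : p ^ M - 1 ≠ 0 := sub_ne_zero.mpr (pow_lt_one₀ hp0.le hp1 hM).ne
  rw [iteratedGeomSum_eq hp1.ne, geom_sum_eq hp1.ne]
  field_simp
  ring

theorem tendsto_stepVariance_div_sq (hε : ε ≠ 0) :
    Tendsto (fun Δt => stepVariance ε vt M Δt / Δt ^ 2) (𝓝[>] 0) (𝓝 0) := by
  simpa [rescaledStepVariance_one] using
    tendsto_nhdsWithin_of_eq_comp_noCollisionProb hε (g := fun p => _ * _)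
      (continuousAt_const.mul (continuousAt_rescaledStepVariance M))
      (fun _ => stepVariance_div_sq vt hε)

theorem tendsto_sigma1_mul_div (hε : ε ≠ 0) (hM : M ≠ 0) :
    Tendsto (fun Δt => sigma1 ε vt M Δt * noCollisionProb ε Δt ^ M
        / ((1 - noCollisionProb ε Δt ^ M) ^ 2 * Δt)) (𝓝[>] 0) (𝓝 (vt ^ 2 * (2 * (M - 1)))) := by
  simpa [rescaledFineCovariance_one M hM] using
    tendsto_nhdsWithin_of_eq_comp_noCollisionProb hε (g := fun p => _ * _)
      (continuousAt_const.mul (continuousAt_rescaledFineCovariance M hM))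
      (fun _ => sigma1_mul_div vt hε hM)

theorem tendsto_sigma2_mul_div (hε : ε ≠ 0) (hvt : vt ≠ 0) (hM : M ≠ 0) :
    Tendsto (fun Δt => sigma2 ε vt M Δt * noCollisionProb ε (M * Δt)
        / ((1 - noCollisionProb ε (M * Δt)) ^ 2 * Δt)) (𝓝[>] 0) (𝓝 (vt ^ 2 * (1 - M))) := by
  simpa [rescaledCoarseCovariance_one M] using
    tendsto_nhdsWithin_of_eq_comp_noCollisionProb hε (g := fun p => _ * _)
      (continuousAt_const.mul (continuousAt_rescaledCoarseCovariance M hM))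
      (fun _ => sigma2_mul_div vt hε hvt hM)

end

theorem tendsto_div_mul_natCast_nhdsGT {t c : ℝ} (ht : 0 < t) (hc : 0 < c) :
    Tendsto (fun N : ℕ => t / (c * N)) atTop (𝓝[>] 0) := by
  refine tendsto_nhdsWithin_iff.mpr ⟨tendsto_const_nhds.div_atTop ?_, ?_⟩
  · exact tendsto_natCast_atTop_atTop.const_mul_atTop hc
  · filter_upwards [eventually_gt_atTop 0] with N hN
    exact div_pos ht (by positivity)

end CoupledTransport

end

open CoupledTransport

/-- With `Δt = t*/(MN)`, `p = ε²/(ε²+Δt)`, `q = ε²/(ε²+MΔt)`, `ṽ_f = εṽ/(ε²+Δt)`,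
`ṽ_c = εṽ/(ε²+MΔt)`,
`σ₁ = ε²ṽ²·(p^{1−M} + p^{M+1} − 2p) − M²Δt²ṽ_c²`,
`σ₂ = M²Δt²ṽ_c²·(1 − (Δt·ṽ_f/(ε²·ṽ_c))·(((q − p^M)/(1 − p^M))·((ε²+Δt)/Δt − M·p^M/(1 − p^M)) + ε²/Δt))`,
and the total transport-difference variance
`V_T(N) = N·(MΔt²ṽ_f² − M²Δt²ṽ_c² + 2ε²ṽ_f²·(MΔt − (ε²+Δt)(1 − p^M)))
  + 2·(σ₁·p^M·(p^{MN} − N·p^M + N − 1)/(1 − p^M)² + σ₂·q·(q^N − N·q + N − 1)/(1 − q)²)`,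
one has `lim_{N→∞} V_T(N)/Δt = 2ṽ²·(M − 1)·(e^{−t*/ε²} − 1 + t*/ε²)`. -/
theorem transport_difference_variance_rate (ε vt tstar : ℝ)
    (hε : 0 < ε) (hvt : 0 < vt) (ht : 0 < tstar) (M : ℕ) (hM : 1 ≤ M) :
    Tendsto (fun N : ℕ =>
        let Δt : ℝ := tstar / (M * N)
        let p : ℝ := ε ^ 2 / (ε ^ 2 + Δt)
        let q : ℝ := ε ^ 2 / (ε ^ 2 + M * Δt)
        let vf : ℝ := ε * vt / (ε ^ 2 + Δt)
        let vc : ℝ := ε * vt / (ε ^ 2 + M * Δt)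
        let σ1 : ℝ := ε ^ 2 * vt ^ 2 * (p ^ (1 - (M : ℤ)) + p ^ ((M : ℤ) + 1) - 2 * p)
            - M ^ 2 * Δt ^ 2 * vc ^ 2
        let σ2 : ℝ := M ^ 2 * Δt ^ 2 * vc ^ 2 *
            (1 - Δt * vf / (ε ^ 2 * vc) *
              ((q - p ^ M) / (1 - p ^ M)
                  * ((ε ^ 2 + Δt) / Δt - M * p ^ M / (1 - p ^ M)) + ε ^ 2 / Δt))
        (N * (M * Δt ^ 2 * vf ^ 2 - M ^ 2 * Δt ^ 2 * vc ^ 2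
              + 2 * ε ^ 2 * vf ^ 2 * (M * Δt - (ε ^ 2 + Δt) * (1 - p ^ M)))
          + 2 * (σ1 * p ^ M * (p ^ (M * N) - N * p ^ M + N - 1) / (1 - p ^ M) ^ 2
              + σ2 * q * (q ^ N - N * q + N - 1) / (1 - q) ^ 2)) / Δt)
      atTop
      (nhds (2 * vt ^ 2 * ((M : ℝ) - 1)
        * (Real.exp (-tstar / ε ^ 2) - 1 + tstar / ε ^ 2))) := by
  show Tendsto (fun N : ℕ => transportVariance ε vt M N (tstar / (M * N)) / (tstar / (M * N)))
    atTop _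
  have hM0 : M ≠ 0 := by omega
  have hΔt := tendsto_div_mul_natCast_nhdsGT ht (by positivity : (0 : ℝ) < M)
  have hfine := tendsto_nat_mul_one_sub_noCollisionProb_pow hε.ne'
    (tendsto_nhds_of_tendsto_nhdsWithin hΔt) (τ := tstar / M)
    (by filter_upwards [eventually_ne_atTop 0] with N hN; field_simp) M
  have hcoarse := tendsto_nat_mul_one_sub_noCollisionProb_pow hε.ne'
    (by simpa using (tendsto_nhds_of_tendsto_nhdsWithin hΔt).const_mul (M : ℝ)) (τ := tstar)
    (by filter_upwards [eventually_ne_atTop 0] with N hN; field_simp) 1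
  rw [show (M : ℝ) * (tstar / M) / ε ^ 2 = tstar / ε ^ 2 by field_simp] at hfine
  simp only [Nat.cast_one, one_mul, pow_one] at hcoarse
  have hlim := (((tendsto_stepVariance_div_sq vt (M := M) hε.ne').comp hΔt).const_mul
      (tstar / M)).add
    (((((tendsto_sigma1_mul_div vt hε.ne' hM0).comp hΔt).mul
        (tendsto_pow_sub_nat_mul_add_nat_sub_one hfine)).add
      (((tendsto_sigma2_mul_div vt hε.ne' hvt.ne' hM0).comp hΔt).mul
        (tendsto_pow_sub_nat_mul_add_nat_sub_one hcoarse))).const_mul 2)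
  convert hlim.congr' ?_ using 2
  · rw [neg_div]; ring
  · filter_upwards [eventually_ne_atTop 0] with N hN
    rw [transportVariance_div ε vt M N (by positivity)]
    simp only [Function.comp_apply]
    field_simp
end

section
/- Fix reals ṽ > 0, Δt > 0 and integers M ≥ 1, N ≥ 1. For ε > 0 define p(ε) = ε²/(ε²+Δt), q(ε) = ε²/(ε²+MΔt), ṽ_f(ε) = εṽ/(ε²+Δt), ṽ_c(ε) = εṽ/(ε²+MΔt), σ₁(ε) = ε²ṽ²·(p^{1−M} + p^{M+1} − 2p) − M²Δt²ṽ_c², σ₂(ε) = M²Δt²ṽ_c²·( 1 − (Δt·ṽ_f/(ε²·ṽ_c))·( ((q − p^M)/(1 − p^M))·( (ε²+Δt)/Δt − M·p^M/(1 − p^M) ) + ε²/Δt ) ), and V_T(ε) = N·( MΔt²ṽ_f² − M²Δt²ṽ_c² + 2ε²ṽ_f²·( MΔt − (ε²+Δt)(1 − p^M) ) ) + 2·( σ₁·p^M·(p^{MN} − N·p^M + N − 1)/(1 − p^M)² + σ₂·q·(q^N − N·q + N − 1)/(1 − q)² ). Then lim_{ε → 0⁺} V_T(ε) = 0. -/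
/-!
The only singular factors in `V_T` are the negative power `p^{1-M}` inside `σ₁`, which always
multiplies `p^M`, and the ratio `Δt ṽ_f / (ε² ṽ_c)` inside `σ₂`, which always multiplies `ṽ_c²`.
After these cancellations `V_T` agrees for `ε > 0` with an expression that is continuous on all
of `ℝ` (every denominator stays away from zero because `0 ≤ p, q < 1`), and this expression
vanishes at `ε = 0` since `p`, `q`, `ṽ_f`, `ṽ_c` all do.
-/

open Filter Topology

lemma sub_mul_pow_eq_of_zpow_one_sub {K : Type*} [Field K] {p : K} (hp : p ≠ 0) (M : ℕ)
    (c d : K) :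
    (c * (p ^ (1 - (M : ℤ)) + p ^ ((M : ℤ) + 1) - 2 * p) - d) * p ^ M
      = c * (p * (1 - p ^ M) ^ 2) - d * p ^ M := by
  have hneg : p ^ (1 - (M : ℤ)) * p ^ M = p := by
    rw [← zpow_natCast, ← zpow_add₀ hp, sub_add_cancel, zpow_one]
  have hpos : p ^ ((M : ℤ) + 1) = p ^ (M + 1) := by exact_mod_cast zpow_natCast p (M + 1)
  linear_combination c * hneg + c * p ^ M * hpos

lemma sq_mul_one_sub_div_mul {K : Type*} [Field K] {ε : K} (hε : ε ≠ 0) (a b c d v W : K) :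
    c * (ε * v / b) ^ 2 * (1 - d * (ε * v / a) / (ε ^ 2 * (ε * v / b)) * W)
      = c * (ε * v / b) ^ 2 - c * d * v ^ 2 / (a * b) * W := by
  rcases eq_or_ne v 0 with rfl | hv
  · simp
  rcases eq_or_ne b 0 with rfl | hb
  · simp
  field_simp

lemma one_sub_div_pow_ne_zero {τ : ℝ} (hτ : 0 < τ) (ε : ℝ) {M : ℕ} (hM : M ≠ 0) :
    1 - (ε ^ 2 / (ε ^ 2 + τ)) ^ M ≠ 0 := by
  have hlt : ε ^ 2 / (ε ^ 2 + τ) < 1 := by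
    rw [div_lt_one (by positivity)]
    linarith
  exact (sub_pos.2 (pow_lt_one₀ (by positivity) hlt hM)).ne'

noncomputable def regularizedVariance (vt Δt : ℝ) (M N : ℕ) (ε : ℝ) : ℝ :=
  let p : ℝ := ε ^ 2 / (ε ^ 2 + Δt)
  let q : ℝ := ε ^ 2 / (ε ^ 2 + M * Δt)
  let vf : ℝ := ε * vt / (ε ^ 2 + Δt)
  let vc : ℝ := ε * vt / (ε ^ 2 + M * Δt)
  let σ1p : ℝ := ε ^ 2 * vt ^ 2 * (p * (1 - p ^ M) ^ 2) - M ^ 2 * Δt ^ 2 * vc ^ 2 * p ^ M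
  let σ2 : ℝ := M ^ 2 * Δt ^ 2 * vc ^ 2 -
      M ^ 2 * Δt ^ 2 * Δt * vt ^ 2 / ((ε ^ 2 + Δt) * (ε ^ 2 + M * Δt)) *
        ((q - p ^ M) / (1 - p ^ M) * ((ε ^ 2 + Δt) / Δt - M * p ^ M / (1 - p ^ M)) + ε ^ 2 / Δt)
  N * (M * Δt ^ 2 * vf ^ 2 - M ^ 2 * Δt ^ 2 * vc ^ 2
        + 2 * ε ^ 2 * vf ^ 2 * (M * Δt - (ε ^ 2 + Δt) * (1 - p ^ M)))
    + 2 * (σ1p * (p ^ (M * N) - N * p ^ M + N - 1) / (1 - p ^ M) ^ 2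
        + σ2 * q * (q ^ N - N * q + N - 1) / (1 - q) ^ 2)

lemma continuous_regularizedVariance (vt : ℝ) {Δt : ℝ} (hΔt : 0 < Δt) {M : ℕ} (hM : M ≠ 0)
    (N : ℕ) : Continuous (regularizedVariance vt Δt M N) := by
  have hMΔt : 0 < (M : ℝ) * Δt := mul_pos (by positivity) hΔt
  have hp := fun ε ↦ one_sub_div_pow_ne_zero hΔt ε hM
  have hq := fun ε ↦ one_sub_div_pow_ne_zero hMΔt ε one_ne_zero
  simp only [pow_one] at hq
  unfold regularizedVariance
  dsimp only
  fun_prop (disch := intro ε; first | positivity | simp [hp, hq])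

lemma regularizedVariance_zero (vt Δt : ℝ) {M : ℕ} (hM : M ≠ 0) (N : ℕ) :
    regularizedVariance vt Δt M N 0 = 0 := by
  simp [regularizedVariance, hM]

theorem transport_difference_variance_vanishes_in_diffusion_limit_general
    (vt Δt : ℝ) (hΔt : 0 < Δt) (M N : ℕ) (hM : 1 ≤ M) :
    Tendsto (fun ε : ℝ =>
        let p : ℝ := ε ^ 2 / (ε ^ 2 + Δt)
        let q : ℝ := ε ^ 2 / (ε ^ 2 + M * Δt)
        let vf : ℝ := ε * vt / (ε ^ 2 + Δt)
        let vc : ℝ := ε * vt / (ε ^ 2 + M * Δt)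
        let σ1 : ℝ := ε ^ 2 * vt ^ 2 * (p ^ (1 - (M : ℤ)) + p ^ ((M : ℤ) + 1) - 2 * p)
            - M ^ 2 * Δt ^ 2 * vc ^ 2
        let σ2 : ℝ := M ^ 2 * Δt ^ 2 * vc ^ 2 *
            (1 - Δt * vf / (ε ^ 2 * vc) *
              ((q - p ^ M) / (1 - p ^ M)
                  * ((ε ^ 2 + Δt) / Δt - M * p ^ M / (1 - p ^ M)) + ε ^ 2 / Δt))
        N * (M * Δt ^ 2 * vf ^ 2 - M ^ 2 * Δt ^ 2 * vc ^ 2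
              + 2 * ε ^ 2 * vf ^ 2 * (M * Δt - (ε ^ 2 + Δt) * (1 - p ^ M)))
          + 2 * (σ1 * p ^ M * (p ^ (M * N) - N * p ^ M + N - 1) / (1 - p ^ M) ^ 2
              + σ2 * q * (q ^ N - N * q + N - 1) / (1 - q) ^ 2))
      (nhdsWithin 0 (Set.Ioi 0)) (nhds 0) := by
  have hM0 : M ≠ 0 := by omega
  have hlim := (continuous_regularizedVariance vt hΔt hM0 N).continuousWithinAt
    (s := Set.Ioi 0) (x := 0)
  rw [ContinuousWithinAt, regularizedVariance_zero vt Δt hM0 N] at hlim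
  refine hlim.congr' ?_
  filter_upwards [self_mem_nhdsWithin] with ε (hε : 0 < ε)
  have hp : ε ^ 2 / (ε ^ 2 + Δt) ≠ 0 := (div_pos (by positivity) (by positivity)).ne'
  simp only [regularizedVariance]
  rw [sub_mul_pow_eq_of_zpow_one_sub hp, sq_mul_one_sub_div_mul hε.ne']

/-- With `p(ε) = ε²/(ε²+Δt)`, `q(ε) = ε²/(ε²+MΔt)`, `ṽ_f(ε) = εṽ/(ε²+Δt)`,
`ṽ_c(ε) = εṽ/(ε²+MΔt)`,
`σ₁(ε) = ε²ṽ²·(p^{1−M} + p^{M+1} − 2p) − M²Δt²ṽ_c²`,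
`σ₂(ε) = M²Δt²ṽ_c²·(1 − (Δt·ṽ_f/(ε²·ṽ_c))·(((q − p^M)/(1 − p^M))·((ε²+Δt)/Δt − M·p^M/(1 − p^M)) + ε²/Δt))`,
and
`V_T(ε) = N·(MΔt²ṽ_f² − M²Δt²ṽ_c² + 2ε²ṽ_f²·(MΔt − (ε²+Δt)(1 − p^M)))
  + 2·(σ₁·p^M·(p^{MN} − N·p^M + N − 1)/(1 − p^M)² + σ₂·q·(q^N − N·q + N − 1)/(1 − q)²)`,
one has `lim_{ε→0⁺} V_T(ε) = 0`. -/
theorem transport_difference_variance_vanishes_in_diffusion_limit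
    (vt Δt : ℝ) (hvt : 0 < vt) (hΔt : 0 < Δt) (M N : ℕ) (hM : 1 ≤ M) (hN : 1 ≤ N) :
    Tendsto (fun ε : ℝ =>
        let p : ℝ := ε ^ 2 / (ε ^ 2 + Δt)
        let q : ℝ := ε ^ 2 / (ε ^ 2 + M * Δt)
        let vf : ℝ := ε * vt / (ε ^ 2 + Δt)
        let vc : ℝ := ε * vt / (ε ^ 2 + M * Δt)
        let σ1 : ℝ := ε ^ 2 * vt ^ 2 * (p ^ (1 - (M : ℤ)) + p ^ ((M : ℤ) + 1) - 2 * p)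
            - M ^ 2 * Δt ^ 2 * vc ^ 2
        let σ2 : ℝ := M ^ 2 * Δt ^ 2 * vc ^ 2 *
            (1 - Δt * vf / (ε ^ 2 * vc) *
              ((q - p ^ M) / (1 - p ^ M)
                  * ((ε ^ 2 + Δt) / Δt - M * p ^ M / (1 - p ^ M)) + ε ^ 2 / Δt))
        N * (M * Δt ^ 2 * vf ^ 2 - M ^ 2 * Δt ^ 2 * vc ^ 2
              + 2 * ε ^ 2 * vf ^ 2 * (M * Δt - (ε ^ 2 + Δt) * (1 - p ^ M)))
          + 2 * (σ1 * p ^ M * (p ^ (M * N) - N * p ^ M + N - 1) / (1 - p ^ M) ^ 2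
              + σ2 * q * (q ^ N - N * q + N - 1) / (1 - q) ^ 2))
      (nhdsWithin 0 (Set.Ioi 0)) (nhds 0) :=
  transport_difference_variance_vanishes_in_diffusion_limit_general vt Δt hΔt M N hM
end

section
/- Let a, b, r be reals with 0 ≤ r ≤ 1. On a probability space, let B and B′ be independent real random variables each with mean 0 and variance 1, and let K be a Bernoulli random variable with P(K = 1) = r and P(K = 0) = 1 − r, independent of (B, B′). Then Var[ a·B − b·( K·B + (1 − K)·B′ ) ] = a² + b² − 2·r·a·b. In particular, taking a = ṽ_f, b = ṽ_c with ṽ_f ≥ ṽ_c > 0 and r = ṽ_c/ṽ_f yields variance ṽ_f² − ṽ_c², which is the variance of the difference of the coupled fine and coarse velocities ṽ_f·B and ṽ_c·B(coupled) after both simulations have experienced at least one collision. -/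
open MeasureTheory ProbabilityTheory

/-! Writing the coupled difference as `K·(a - b)B + (1 - K)·(aB - bB')`, a mixture selected by
the independent indicator `K`, its variance is `r·(a - b)² + (1 - r)·(a² + b²)`, because
`K² = K` and `K(1 - K) = 0` make the cross term vanish. -/

section BernoulliMixture

variable {Ω : Type*} [MeasurableSpace Ω] {μ : Measure Ω} {K U V : Ω → ℝ}

lemma ae_eq_zero_or_eq_one_of_measure_eq [IsProbabilityMeasure μ] {r : ℝ} (hK : Measurable K)
    (hr0 : 0 ≤ r) (hr1 : r ≤ 1) (hK1 : μ {ω | K ω = 1} = ENNReal.ofReal r)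
    (hK0 : μ {ω | K ω = 0} = ENNReal.ofReal (1 - r)) :
    ∀ᵐ ω ∂μ, K ω = 0 ∨ K ω = 1 := by
  have hs0 : MeasurableSet {ω | K ω = 0} := hK (measurableSet_singleton 0)
  have hs1 : MeasurableSet {ω | K ω = 1} := hK (measurableSet_singleton 1)
  have hdisj : Disjoint {ω | K ω = 0} {ω | K ω = 1} :=
    Set.disjoint_left.2 fun ω h0 h1 => by simp_all
  refine (ae_iff_measure_eq (p := fun ω => K ω = 0 ∨ K ω = 1)
    (hs0.union hs1).nullMeasurableSet).2 ?_
  rw [Set.ofPred_or, measure_union hdisj hs1, hK0, hK1,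
    ← ENNReal.ofReal_add (by linarith) hr0, measure_univ]
  norm_num

lemma integral_eq_of_ae_eq_zero_or_eq_one {r : ℝ} (hK : Measurable K)
    (hK01 : ∀ᵐ ω ∂μ, K ω = 0 ∨ K ω = 1) (hr0 : 0 ≤ r)
    (hK1 : μ {ω | K ω = 1} = ENNReal.ofReal r) : μ[K] = r := by
  have hs1 : MeasurableSet {ω | K ω = 1} := hK (measurableSet_singleton 1)
  have hK_ind : K =ᵐ[μ] {ω | K ω = 1}.indicator 1 := by
    filter_upwards [hK01] with ω h
    rcases h with h | h <;> simp [h]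
  rw [integral_congr_ae hK_ind, integral_indicator_one hs1,
    measureReal_def, hK1, ENNReal.toReal_ofReal hr0]

lemma integrable_of_ae_eq_zero_or_eq_one [IsFiniteMeasure μ] (hK : AEStronglyMeasurable K μ)
    (hK01 : ∀ᵐ ω ∂μ, K ω = 0 ∨ K ω = 1) : Integrable K μ :=
  Integrable.of_bound hK 1 <| hK01.mono fun ω h => by rcases h with h | h <;> simp [h]

lemma integral_bernoulli_mixture [IsProbabilityMeasure μ] (hK : Integrable K μ)
    (hKU : IndepFun K U μ) (hKV : IndepFun K V μ) (hU : Integrable U μ) (hV : Integrable V μ) :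
    ∫ ω, (K ω * U ω + (1 - K ω) * V ω) ∂μ = μ[K] * μ[U] + (1 - μ[K]) * μ[V] := by
  have hJ : Integrable (fun ω => 1 - K ω) μ := (integrable_const 1).sub hK
  have hJV : IndepFun (fun ω => 1 - K ω) V μ :=
    hKV.comp (measurable_const.sub measurable_id) measurable_id
  have hKU_int : Integrable (fun ω => K ω * U ω) μ := hKU.integrable_mul hK hU
  have hJV_int : Integrable (fun ω => (1 - K ω) * V ω) μ := hJV.integrable_mul hJ hV
  rw [integral_add hKU_int hJV_int,
    hKU.integral_fun_mul_eq_mul_integral hK.1 hU.1,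
    hJV.integral_fun_mul_eq_mul_integral hJ.1 hV.1, integral_sub (integrable_const 1) hK]
  simp

lemma bernoulli_mixture_sq_ae_eq (hK01 : ∀ᵐ ω ∂μ, K ω = 0 ∨ K ω = 1) :
    (fun ω => (K ω * U ω + (1 - K ω) * V ω) ^ 2)
      =ᵐ[μ] fun ω => K ω * U ω ^ 2 + (1 - K ω) * V ω ^ 2 := by
  filter_upwards [hK01] with ω h
  rcases h with h | h <;> simp [h]

theorem variance_bernoulli_mixture [IsProbabilityMeasure μ] (hK : Measurable K)
    (hK01 : ∀ᵐ ω ∂μ, K ω = 0 ∨ K ω = 1) (hKUV : IndepFun K (fun ω => (U ω, V ω)) μ)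
    (hU : MemLp U 2 μ) (hV : MemLp V 2 μ) (hU0 : μ[U] = 0) (hV0 : μ[V] = 0) :
    Var[fun ω => K ω * U ω + (1 - K ω) * V ω; μ]
      = μ[K] * Var[U; μ] + (1 - μ[K]) * Var[V; μ] := by
  have hKint := integrable_of_ae_eq_zero_or_eq_one hK.aestronglyMeasurable hK01
  have hKU : IndepFun K U μ := hKUV.comp measurable_id measurable_fst
  have hKV : IndepFun K V μ := hKUV.comp measurable_id measurable_snd
  have hKU2 : IndepFun K (fun ω => U ω ^ 2) μ :=
    hKUV.comp measurable_id (measurable_fst.pow_const 2)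
  have hKV2 : IndepFun K (fun ω => V ω ^ 2) μ :=
    hKUV.comp measurable_id (measurable_snd.pow_const 2)
  have hmean : ∫ ω, (K ω * U ω + (1 - K ω) * V ω) ∂μ = 0 := by
    rw [integral_bernoulli_mixture hKint hKU hKV (hU.integrable one_le_two)
      (hV.integrable one_le_two), hU0, hV0]
    ring
  have hmeas : AEMeasurable (fun ω => K ω * U ω + (1 - K ω) * V ω) μ :=
    (hK.aemeasurable.mul hU.aemeasurable).add
      ((measurable_const.sub hK).aemeasurable.mul hV.aemeasurable)
  rw [variance_of_integral_eq_zero hmeas hmean, integral_congr_ae (bernoulli_mixture_sq_ae_eq hK01),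
    integral_bernoulli_mixture hKint hKU2 hKV2 hU.integrable_sq hV.integrable_sq,
    variance_of_integral_eq_zero hU.aemeasurable hU0,
    variance_of_integral_eq_zero hV.aemeasurable hV0]

end BernoulliMixture

theorem variance_coupled_velocity_difference_general
    {Ω : Type*} [MeasurableSpace Ω] (μ : Measure Ω) [IsProbabilityMeasure μ]
    (a b r : ℝ) (hr0 : 0 ≤ r) (hr1 : r ≤ 1)
    (B B' K : Ω → ℝ)
    (hK : Measurable K)
    (hBL2 : MemLp B 2 μ) (hB'L2 : MemLp B' 2 μ)
    (hBmean : ∫ ω, B ω ∂μ = 0) (hB'mean : ∫ ω, B' ω ∂μ = 0)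
    (hBvar : variance B μ = 1) (hB'var : variance B' μ = 1)
    (hK1 : μ {ω | K ω = 1} = ENNReal.ofReal r)
    (hK0 : μ {ω | K ω = 0} = ENNReal.ofReal (1 - r))
    (hBB' : IndepFun B B' μ)
    (hKind : IndepFun K (fun ω => (B ω, B' ω)) μ) :
    variance (fun ω => a * B ω - b * (K ω * B ω + (1 - K ω) * B' ω)) μ
      = a ^ 2 + b ^ 2 - 2 * r * a * b := by
  have hK01 := ae_eq_zero_or_eq_one_of_measure_eq hK hr0 hr1 hK1 hK0
  have hsplit : (fun ω => a * B ω - b * (K ω * B ω + (1 - K ω) * B' ω))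
      = fun ω => K ω * ((a - b) * B ω) + (1 - K ω) * (a * B ω - b * B' ω) := by
    funext ω; ring
  have hKUV : IndepFun K (fun ω => ((a - b) * B ω, a * B ω - b * B' ω)) μ :=
    hKind.comp (ψ := fun p : ℝ × ℝ => ((a - b) * p.1, a * p.1 - b * p.2)) measurable_id
      (by fun_prop)
  have hdiff_mean : ∫ ω, (a * B ω - b * B' ω) ∂μ = 0 := by
    rw [integral_sub ((hBL2.integrable one_le_two).const_mul a)
      ((hB'L2.integrable one_le_two).const_mul b), integral_const_mul, integral_const_mul,
      hBmean, hB'mean]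
    ring
  have hdiff_var : Var[fun ω => a * B ω - b * B' ω; μ] = a ^ 2 + b ^ 2 := by
    have hind : IndepFun (fun ω => a * B ω) (fun ω => b * B' ω) μ :=
      hBB'.comp (measurable_const_mul a) (measurable_const_mul b)
    rw [variance_fun_sub (hBL2.const_mul a) (hB'L2.const_mul b),
      hind.covariance_eq_zero (hBL2.const_mul a) (hB'L2.const_mul b),
      variance_const_mul, variance_const_mul, hBvar, hB'var]
    ring
  rw [hsplit, variance_bernoulli_mixture hK hK01 hKUV (hBL2.const_mul _)
      ((hBL2.const_mul a).sub (hB'L2.const_mul b)) (by rw [integral_const_mul, hBmean, mul_zero])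
      hdiff_mean, integral_eq_of_ae_eq_zero_or_eq_one hK hK01 hr0 hK1, variance_const_mul, hBvar,
    hdiff_var]
  ring

/-- Let `0 ≤ r ≤ 1`, let `B` and `B'` be independent mean-zero unit-variance real
random variables, and let `K` be a Bernoulli random variable with `P(K = 1) = r` and
`P(K = 0) = 1 − r`, independent of the pair `(B, B')`. Then
`Var[a·B − b·(K·B + (1 − K)·B')] = a² + b² − 2·r·a·b`. -/
theorem variance_coupled_velocity_difference
    {Ω : Type*} [MeasurableSpace Ω] (μ : Measure Ω) [IsProbabilityMeasure μ]
    (a b r : ℝ) (hr0 : 0 ≤ r) (hr1 : r ≤ 1)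
    (B B' K : Ω → ℝ)
    (hB : Measurable B) (hB' : Measurable B') (hK : Measurable K)
    (hBL2 : MemLp B 2 μ) (hB'L2 : MemLp B' 2 μ)
    (hBmean : ∫ ω, B ω ∂μ = 0) (hB'mean : ∫ ω, B' ω ∂μ = 0)
    (hBvar : variance B μ = 1) (hB'var : variance B' μ = 1)
    (hK1 : μ {ω | K ω = 1} = ENNReal.ofReal r)
    (hK0 : μ {ω | K ω = 0} = ENNReal.ofReal (1 - r))
    (hBB' : IndepFun B B' μ)
    (hKind : IndepFun K (fun ω => (B ω, B' ω)) μ) :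
    variance (fun ω => a * B ω - b * (K ω * B ω + (1 - K ω) * B' ω)) μ
      = a ^ 2 + b ^ 2 - 2 * r * a * b :=
  variance_coupled_velocity_difference_general μ a b r hr0 hr1 B B' K hK hBL2 hB'L2 hBmean hB'mean
    hBvar hB'var hK1 hK0 hBB' hKind
end

section
/- Let α, β > 0 with α ≥ β/2, and let c₁, c₂, c₃ > 0. Suppose (V_ℓ)_{ℓ ∈ ℕ} and (C_ℓ)_{ℓ ∈ ℕ} are sequences of reals with 0 ≤ V_ℓ ≤ c₂·2^{−β·ℓ} and 0 < C_ℓ ≤ c₃·2^{β·ℓ} for all ℓ. Then there exists a constant c₄ > 0 such that for every real E with 0 < E < e^{−1} there exist a natural number L and positive integers P₀, …, P_L satisfying c₁²·2^{−2·α·L} + Σ_{ℓ=0}^{L} V_ℓ/P_ℓ ≤ E² and Σ_{ℓ=0}^{L} P_ℓ·C_ℓ ≤ c₄·E^{−2}·(log E)². -/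
/-!
Put `r = 2^{2α}`. Take the first level `L` at which the squared bias `c₁² r^{-L}` drops below
`E²/2`; minimality gives `r^L ≲ E⁻²`, hence `L + 1 ≲ |log E|`. Split the remaining `E²/2`
equally among the `L + 1` levels, `P_ℓ ≈ 2(L+1) c₂ 2^{-βℓ} / E²`. Since `γ = β`, the cost of
every level is then at most `2(L+1) c₂c₃/E² + c₃ 2^{βL}`, and `2^{βL} ≤ r^L ≲ E⁻²` because
`β ≤ 2α`; summing over the `L + 1 ≲ |log E|` levels gives `E⁻² (log E)²`.
-/

open Finset Real

lemma exists_le_mul_pow_and_mul_pow_le {r c δ : ℝ} (hr : 1 < r) (hδ : 0 < δ) (hδ1 : δ ≤ 1) :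
    ∃ L : ℕ, c ≤ δ * r ^ L ∧ δ * r ^ L ≤ max c 1 * r := by
  obtain ⟨n, hn, hn'⟩ := exists_nat_pow_near (le_max_right (c / δ) 1) hr
  refine ⟨n + 1, ?_, ?_⟩
  · rw [← div_le_iff₀' hδ]
    exact (le_max_left _ _).trans hn'.le
  · have hmax : δ * max (c / δ) 1 ≤ max c 1 := by
      rw [mul_max_of_nonneg _ _ hδ.le, mul_div_cancel₀ _ hδ.ne', mul_one]
      exact max_le_max le_rfl hδ1
    calc δ * r ^ (n + 1) = δ * r ^ n * r := by rw [pow_succ, mul_assoc]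
      _ ≤ δ * max (c / δ) 1 * r := by gcongr
      _ ≤ max c 1 * r := by gcongr

lemma natCast_add_one_le_mul_neg_log {r M δ : ℝ} {L : ℕ} (hr : 1 < r) (hM : 1 ≤ M) (hδ : 0 < δ)
    (hlog : 1 ≤ -log δ) (hL : δ * r ^ L ≤ M * r) :
    (L : ℝ) + 1 ≤ (log M / log r + 2 + 1 / log r) * -log δ := by
  have hlogr : 0 < log r := log_pos hr
  have hlogL : log δ + L * log r ≤ log M + log r := by
    have := log_le_log (by positivity) hL
    rwa [log_mul hδ.ne' (by positivity), log_pow, log_mul (by positivity) (by positivity)] at this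
  have hlogM : 0 ≤ log M / log r := div_nonneg (log_nonneg hM) hlogr.le
  have hL' : (L : ℝ) ≤ log M / log r + 1 + 1 / log r * -log δ := by
    rw [div_add_one hlogr.ne', one_div_mul_eq_div, ← add_div, le_div_iff₀ hlogr]
    linarith
  nlinarith [one_div_pos.mpr hlogr]

lemma exists_level_le_log {r : ℝ} (hr : 1 < r) (c : ℝ) :
    ∃ K > 0, ∀ E : ℝ, 0 < E → E < exp (-1) →
      ∃ L : ℕ, c ≤ E ^ 2 * r ^ L ∧ E ^ 2 * r ^ L ≤ K ∧ (L : ℝ) + 1 ≤ K * -log E := by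
  set K₀ := log (max c 1) / log r + 2 + 1 / log r
  have hK₀ : 0 < K₀ := by
    have := div_nonneg (log_nonneg (le_max_right c 1)) (log_pos hr).le
    have := one_div_pos.mpr (log_pos hr)
    linarith
  refine ⟨max (max c 1 * r) (2 * K₀), by positivity, fun E hE hE1 => ?_⟩
  have hlogE : 1 ≤ -log E := by
    have := log_lt_log hE hE1
    rw [log_exp] at this
    linarith
  have hE21 : E ^ 2 ≤ 1 := pow_le_one₀ hE.le (hE1.trans (exp_lt_one_iff.mpr (by norm_num))).le
  obtain ⟨L, hcL, hL⟩ := exists_le_mul_pow_and_mul_pow_le (c := c) hr (by positivity) hE21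
  have hLlog := natCast_add_one_le_mul_neg_log hr (le_max_right c 1) (by positivity)
    (by rw [log_pow]; push_cast; linarith) hL
  refine ⟨L, hcL, hL.trans (le_max_left _ _), ?_⟩
  calc (L : ℝ) + 1 ≤ 2 * K₀ * -log E := by rw [log_pow] at hLlog; push_cast at hLlog; linarith
    _ ≤ _ := by gcongr; exact le_max_right _ _
lemma exists_sampleSizes_sum_div_le (L : ℕ) {V v : ℕ → ℝ} {δ : ℝ} (hδ : 0 < δ) (hv : ∀ ℓ, 0 ≤ v ℓ)
    (hV : ∀ ℓ, V ℓ ≤ v ℓ) :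
    ∃ P : ℕ → ℕ, (∀ ℓ, 0 < P ℓ) ∧ ∑ ℓ ∈ range (L + 1), V ℓ / P ℓ ≤ δ ∧
      ∀ ℓ, (P ℓ : ℝ) ≤ (L + 1) * v ℓ / δ + 1 := by
  -- `⌊x⌋₊ + 1` rather than `⌈x⌉₊`, which would vanish when `v ℓ = 0`
  refine ⟨fun ℓ => ⌊(L + 1) * v ℓ / δ⌋₊ + 1, fun ℓ => Nat.succ_pos _, ?_,
    fun ℓ => by push_cast; gcongr; exact Nat.floor_le (by have := hv ℓ; positivity)⟩
  have hterm : ∀ ℓ ∈ range (L + 1), V ℓ / (⌊(L + 1) * v ℓ / δ⌋₊ + 1 : ℕ) ≤ δ / (L + 1) := by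
    intro ℓ _
    have hP := Nat.lt_floor_add_one ((L + 1) * v ℓ / δ)
    rw [div_lt_iff₀ hδ] at hP
    rw [div_le_div_iff₀ (by positivity) (by positivity)]
    push_cast
    nlinarith [hV ℓ]
  calc ∑ ℓ ∈ range (L + 1), V ℓ / (⌊(L + 1) * v ℓ / δ⌋₊ + 1 : ℕ)
      ≤ (L + 1) * (δ / (L + 1)) := by
        simpa using sum_le_card_nsmul _ _ _ hterm
    _ = δ := mul_div_cancel₀ _ (by positivity)

lemma sum_mul_le_of_le_add_one {L : ℕ} {P : ℕ → ℕ} {C v w : ℕ → ℝ} {δ c W : ℝ}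
    (hP : ∀ ℓ, (P ℓ : ℝ) ≤ (L + 1) * v ℓ / δ + 1) (hC : ∀ ℓ, C ℓ ≤ w ℓ) (hw : ∀ ℓ, 0 ≤ w ℓ)
    (hvw : ∀ ℓ, v ℓ * w ℓ = c) (hW : ∀ ℓ ≤ L, w ℓ ≤ W) :
    ∑ ℓ ∈ range (L + 1), (P ℓ : ℝ) * C ℓ ≤ (L + 1) * ((L + 1) * c / δ + W) := by
  have hterm : ∀ ℓ ∈ range (L + 1), (P ℓ : ℝ) * C ℓ ≤ (L + 1) * c / δ + W := by
    intro ℓ hℓ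
    calc (P ℓ : ℝ) * C ℓ ≤ P ℓ * w ℓ := mul_le_mul_of_nonneg_left (hC ℓ) (Nat.cast_nonneg _)
      _ ≤ ((L + 1) * v ℓ / δ + 1) * w ℓ := mul_le_mul_of_nonneg_right (hP ℓ) (hw ℓ)
      _ = (L + 1) * (v ℓ * w ℓ) / δ + w ℓ := by ring
      _ ≤ (L + 1) * c / δ + W := by
        rw [hvw]; gcongr; exact hW ℓ (Nat.lt_succ_iff.mp (mem_range.mp hℓ))
  simpa [mul_add] using sum_le_card_nsmul _ _ _ hterm

theorem mlmc_complexity_beta_eq_gamma_general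
    (α β c₁ c₂ c₃ : ℝ) (hα : 0 < α) (hαβ : β / 2 ≤ α)
    (hc₂ : 0 < c₂) (hc₃ : 0 < c₃)
    (V C : ℕ → ℝ)
    (hV : ∀ ℓ, V ℓ ≤ c₂ * (2 : ℝ) ^ (-(β * (ℓ : ℝ))))
    (hC : ∀ ℓ, C ℓ ≤ c₃ * (2 : ℝ) ^ (β * (ℓ : ℝ))) :
    ∃ c₄ : ℝ, 0 < c₄ ∧ ∀ E : ℝ, 0 < E → E < Real.exp (-1) →
      ∃ (L : ℕ) (P : ℕ → ℕ), (∀ ℓ ≤ L, 0 < P ℓ) ∧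
        c₁ ^ 2 * (2 : ℝ) ^ (-(2 * α * (L : ℝ)))
            + ∑ ℓ ∈ Finset.range (L + 1), V ℓ / (P ℓ : ℝ) ≤ E ^ 2 ∧
        ∑ ℓ ∈ Finset.range (L + 1), (P ℓ : ℝ) * C ℓ
            ≤ c₄ * E ^ (-2 : ℤ) * Real.log E ^ 2 := by
  set r : ℝ := 2 ^ (2 * α)
  have hr_pow (n : ℕ) : (2 : ℝ) ^ (2 * α * n) = r ^ n := rpow_mul_natCast zero_le_two _ _
  have hr : 1 < r := one_lt_rpow one_lt_two (by positivity)
  obtain ⟨K, hK, hlevel⟩ := exists_level_le_log hr (2 * c₁ ^ 2)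
  refine ⟨K ^ 2 * (2 * c₂ * c₃ + c₃ * K), by positivity, fun E hE hE1 => ?_⟩
  obtain ⟨L, hbias, hrL, hLK⟩ := hlevel E hE hE1
  have hE2 : 0 < E ^ 2 := by positivity
  obtain ⟨P, hP0, hvar, hP⟩ := exists_sampleSizes_sum_div_le L (half_pos hE2)
    (v := fun ℓ => c₂ * 2 ^ (-(β * ℓ))) (fun ℓ => by positivity) hV
  refine ⟨L, P, fun ℓ _ => hP0 ℓ, ?_, ?_⟩
  · have : c₁ ^ 2 * (2 : ℝ) ^ (-(2 * α * L)) ≤ E ^ 2 / 2 := by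
      rw [rpow_neg zero_le_two, hr_pow, ← div_eq_mul_inv, div_le_iff₀ (by positivity)]
      linarith
    linarith
  have hcost := sum_mul_le_of_le_add_one hP hC (w := fun ℓ => c₃ * 2 ^ (β * ℓ))
    (fun ℓ => by positivity) (c := c₂ * c₃)
    (fun ℓ => by simp only [rpow_neg zero_le_two]; field_simp) (W := c₃ * r ^ L)
    (fun ℓ hℓ => by rw [← hr_pow]; gcongr; exacts [one_le_two, by linarith])
  have hL1 : (1 : ℝ) ≤ L + 1 := by linarith [(L.cast_nonneg : (0 : ℝ) ≤ L)]
  calc ∑ ℓ ∈ range (L + 1), (P ℓ : ℝ) * C ℓ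
      ≤ (L + 1) * ((L + 1) * (c₂ * c₃) / (E ^ 2 / 2) + c₃ * r ^ L) := hcost
    _ ≤ (L + 1) * ((L + 1) * (c₂ * c₃) / (E ^ 2 / 2) + (L + 1) * (c₃ * K / E ^ 2)) := by
      gcongr _ * (_ + ?_)
      calc c₃ * r ^ L ≤ c₃ * K / E ^ 2 := by rw [le_div_iff₀ hE2]; nlinarith
        _ ≤ (L + 1) * (c₃ * K / E ^ 2) := le_mul_of_one_le_left (by positivity) hL1
    _ = ((L : ℝ) + 1) ^ 2 * (2 * c₂ * c₃ + c₃ * K) / E ^ 2 := by field_simp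
    _ ≤ (K * -log E) ^ 2 * (2 * c₂ * c₃ + c₃ * K) / E ^ 2 := by gcongr
    _ = K ^ 2 * (2 * c₂ * c₃ + c₃ * K) * E ^ (-2 : ℤ) * log E ^ 2 := by
      rw [zpow_neg, zpow_two]; ring

/-- Deterministic core of the multilevel Monte Carlo complexity theorem in the case
`β = γ`: if the per-sample variances satisfy `0 ≤ V_ℓ ≤ c₂·2^{−βℓ}` and the
per-sample costs satisfy `0 < C_ℓ ≤ c₃·2^{βℓ}`, with `α ≥ β/2`, then there is a
constant `c₄ > 0` such that for every `0 < E < e⁻¹` there exist a level `L` and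
positive sample numbers `P₀, …, P_L` with
`c₁²·2^{−2αL} + Σ_{ℓ=0}^L V_ℓ/P_ℓ ≤ E²` (mean square error bound) and
`Σ_{ℓ=0}^L P_ℓ·C_ℓ ≤ c₄·E^{−2}·(log E)²` (cost bound). -/
theorem mlmc_complexity_beta_eq_gamma
    (α β c₁ c₂ c₃ : ℝ) (hα : 0 < α) (hβ : 0 < β) (hαβ : β / 2 ≤ α)
    (hc₁ : 0 < c₁) (hc₂ : 0 < c₂) (hc₃ : 0 < c₃)
    (V C : ℕ → ℝ)
    (hV0 : ∀ ℓ, 0 ≤ V ℓ)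
    (hV : ∀ ℓ, V ℓ ≤ c₂ * (2 : ℝ) ^ (-(β * (ℓ : ℝ))))
    (hC0 : ∀ ℓ, 0 < C ℓ)
    (hC : ∀ ℓ, C ℓ ≤ c₃ * (2 : ℝ) ^ (β * (ℓ : ℝ))) :
    ∃ c₄ : ℝ, 0 < c₄ ∧ ∀ E : ℝ, 0 < E → E < Real.exp (-1) →
      ∃ (L : ℕ) (P : ℕ → ℕ), (∀ ℓ ≤ L, 0 < P ℓ) ∧
        c₁ ^ 2 * (2 : ℝ) ^ (-(2 * α * (L : ℝ)))
            + ∑ ℓ ∈ Finset.range (L + 1), V ℓ / (P ℓ : ℝ) ≤ E ^ 2 ∧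
        ∑ ℓ ∈ Finset.range (L + 1), (P ℓ : ℝ) * C ℓ
            ≤ c₄ * E ^ (-2 : ℤ) * Real.log E ^ 2 :=
  mlmc_complexity_beta_eq_gamma_general α β c₁ c₂ c₃ hα hαβ hc₂ hc₃ V C hV hC
end
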